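/- Suppose in addition that T takes values in the positive integers. Suppose there are constants C_h ≥ 1 and h ≥ 0 such that #σ^{-m}(x) ≤ C_h·e^{m·h} for all x ∈ X⁺, m ∈ ℕ, that T is bounded, and that inf F ≥ h + ln 2; set ω⁻ := (inf F − h)/sup T > 0. Then for every complex ω with 0 < Re(ω) < ω⁻ and every x ∈ X⁺: (a) the Fourier–Laplace transform κ̂^x(ω) := Σ_{t ∈ ℤ} κ^x(t)·e^{ω t} converges absolutely (indeed κ^x(t) = κ^x(0) for all t ≤ 0, so Σ_{t ≤ 0} κ^x(t) e^{ω t} = κ^x(0)/(1 − e^{−ω}), and Σ_{t ≥ 1} |κ^x(t) e^{ω t}| ≤ C/(1 − e^{Re(ω) − ω⁻}) for a constant C); and (b) it satisfies the transformed renewal equation κ̂^x(ω) = 1/(1 − e^{−ω}) + Σ_{y ∈ σ^{-1}(x)} exp(ω·T(y) − F(y))·κ̂^y(ω). -/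

import Mathlib

/-!
An `m`-fold preimage `y` of `x` has weight `exp (-S_m F y) ≤ e^{-m inf F}`, and there are at most
`C_h e^{mh}` of them, so level `m` of the renewal sum has mass at most `C_h q^m` with
`q = e^{h - inf F} < 1`; moreover it vanishes unless `t ≤ m sup T`. Summing the levels
`m ≥ t / sup T` gives `κ^x(t) ≤ C e^{-ω⁻ t}` with `C = C_h / (1 - q)`, while `κ^x` is constant on
`t ≤ 0` because `T ≥ 0`. This gives absolute convergence for `0 < Re ω < ω⁻` and the tail bound,
with a constant independent of `ω`.

Splitting off the level `m = 0` and viewing an `(m+1)`-fold preimage of `x` as an `m`-fold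
preimage of some `y ∈ σ⁻¹(x)` gives `κ^x(t) = 1[t ≤ 0] + Σ_{σy = x} e^{-F y} κ^y(t - T y)`.
Since `T` is integer-valued, multiplying by `e^{ωt}` and summing over `t ∈ ℤ` turns the shift by
`T y` into the factor `e^{ω T y}`.
-/

variable {A : Type*}

/-- The one-sided subshift of finite type determined by the transition relation `R`. -/
def OneSubshift (R : A → A → Prop) : Set (ℕ → A) :=
  {x | ∀ i : ℕ, R (x i) (x (i + 1))}

/-- The left shift on one-sided sequences. -/
def shiftN (x : ℕ → A) : ℕ → A := fun i => x (i + 1)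

/-- Birkhoff sums `S_m f = ∑_{i=0}^{m-1} f ∘ σ^i`. -/
noncomputable def birkhoffN (f : (ℕ → A) → ℝ) (m : ℕ) (x : ℕ → A) : ℝ :=
  ∑ i ∈ Finset.range m, f (shiftN^[i] x)

/-- The set `σ^{-m}(x)` of `m`-fold preimages of `x` inside the subshift. -/
def preim (R : A → A → Prop) (m : ℕ) (x : ℕ → A) : Set (ℕ → A) :=
  {y ∈ OneSubshift R | shiftN^[m] y = x}

/-- The term `exp(−S_m F(y)) · 1[S_m T(y) ≥ t]` of the renewal sum. -/
noncomputable def renewalTerm (F T : (ℕ → A) → ℝ) (t : ℝ) (m : ℕ) (y : ℕ → A) : ℝ :=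
  Real.exp (-(birkhoffN F m y)) * (if t ≤ birkhoffN T m y then 1 else 0)

/-- The renewal sum `κ^x(t)`. -/
noncomputable def kappa (R : A → A → Prop) (F T : (ℕ → A) → ℝ) (x : ℕ → A) (t : ℝ) : ℝ :=
  ∑' p : (Σ m : ℕ, preim R m x), renewalTerm F T t p.1 p.2.val

/-- The Fourier–Laplace transform `κ̂^x(ω) = ∑_{t ∈ ℤ} κ^x(t) e^{ω t}`. -/
noncomputable def kappaHat (R : A → A → Prop) (F T : (ℕ → A) → ℝ)
    (x : ℕ → A) (ω : ℂ) : ℂ :=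
  ∑' t : ℤ, (kappa R F T x (t : ℝ) : ℂ) * Complex.exp (ω * (t : ℂ))

section Subshift

variable {R : A → A → Prop}

lemma shiftN_mem {x : ℕ → A} (hx : x ∈ OneSubshift R) : shiftN x ∈ OneSubshift R :=
  fun i => hx (i + 1)

lemma iterate_shiftN_mem {x : ℕ → A} (hx : x ∈ OneSubshift R) (m : ℕ) :
    shiftN^[m] x ∈ OneSubshift R := by
  induction m with
  | zero => exact hx
  | succ n ih => rw [Function.iterate_succ_apply']; exact shiftN_mem ih

lemma birkhoffN_zero (f : (ℕ → A) → ℝ) (x : ℕ → A) : birkhoffN f 0 x = 0 :=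
  Finset.sum_range_zero _

lemma birkhoffN_succ (f : (ℕ → A) → ℝ) (m : ℕ) (x : ℕ → A) :
    birkhoffN f (m + 1) x = birkhoffN f m x + f (shiftN^[m] x) :=
  Finset.sum_range_succ _ _

lemma mul_le_birkhoffN {f : (ℕ → A) → ℝ} {c : ℝ} (hf : ∀ y ∈ OneSubshift R, c ≤ f y)
    {x : ℕ → A} (hx : x ∈ OneSubshift R) (m : ℕ) : m * c ≤ birkhoffN f m x := by
  simpa [birkhoffN] using Finset.card_nsmul_le_sum (Finset.range m) _ c
    fun i _ => hf _ (iterate_shiftN_mem hx i)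

lemma birkhoffN_le_mul {f : (ℕ → A) → ℝ} {c : ℝ} (hf : ∀ y ∈ OneSubshift R, f y ≤ c)
    {x : ℕ → A} (hx : x ∈ OneSubshift R) (m : ℕ) : birkhoffN f m x ≤ m * c := by
  simpa [birkhoffN] using Finset.sum_le_card_nsmul (Finset.range m) _ c
    fun i _ => hf _ (iterate_shiftN_mem hx i)

lemma birkhoffN_nonneg {f : (ℕ → A) → ℝ} (hf : ∀ y ∈ OneSubshift R, 0 ≤ f y)
    {x : ℕ → A} (hx : x ∈ OneSubshift R) (m : ℕ) : 0 ≤ birkhoffN f m x := by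
  simpa using mul_le_birkhoffN hf hx m

lemma tsum_preim_zero {M : Type*} [AddCommMonoid M] [TopologicalSpace M] {x : ℕ → A}
    (hx : x ∈ OneSubshift R) (f : (ℕ → A) → M) : ∑' y : preim R 0 x, f y = f x :=
  tsum_eq_single ⟨x, hx, rfl⟩ fun y hy => (hy (Subtype.ext y.2.2)).elim

lemma iterate_shiftN_mem_preim_one {x z : ℕ → A} {m : ℕ} (hz : z ∈ preim R (m + 1) x) :
    shiftN^[m] z ∈ preim R 1 x := by
  refine ⟨iterate_shiftN_mem hz.1 m, ?_⟩
  rw [← Function.iterate_add_apply, add_comm 1 m]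
  exact hz.2

lemma mem_preim_succ {x y z : ℕ → A} (hy : y ∈ preim R 1 x) {m : ℕ} (hz : z ∈ preim R m y) :
    z ∈ preim R (m + 1) x := by
  refine ⟨hz.1, ?_⟩
  rw [add_comm m 1, Function.iterate_add_apply, hz.2]
  exact hy.2

def preimSuccEquiv (R : A → A → Prop) (x : ℕ → A) :
    (Σ m : ℕ, preim R (m + 1) x) ≃ (Σ y : preim R 1 x, Σ m : ℕ, preim R m y) where
  toFun p := ⟨⟨shiftN^[p.1] p.2, iterate_shiftN_mem_preim_one p.2.2⟩, p.1, ⟨p.2, p.2.2.1, rfl⟩⟩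
  invFun q := ⟨q.2.1, ⟨q.2.2, mem_preim_succ q.1.2 q.2.2.2⟩⟩
  left_inv _ := rfl
  right_inv := by
    rintro ⟨⟨y, hy⟩, m, ⟨z, hz⟩⟩
    obtain rfl : shiftN^[m] z = y := hz.2
    rfl

end Subshift

section RenewalTerm

variable {F T : (ℕ → A) → ℝ}

lemma renewalTerm_nonneg (t : ℝ) (m : ℕ) (y : ℕ → A) : 0 ≤ renewalTerm F T t m y := by
  unfold renewalTerm
  positivity

lemma renewalTerm_zero (t : ℝ) (y : ℕ → A) :
    renewalTerm F T t 0 y = if t ≤ 0 then 1 else 0 := by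
  rw [renewalTerm, birkhoffN_zero, birkhoffN_zero, neg_zero, Real.exp_zero, one_mul]

lemma renewalTerm_succ (t : ℝ) (m : ℕ) (y : ℕ → A) :
    renewalTerm F T t (m + 1) y =
      Real.exp (-F (shiftN^[m] y)) * renewalTerm F T (t - T (shiftN^[m] y)) m y := by
  simp only [renewalTerm, birkhoffN_succ, sub_le_iff_le_add, neg_add, Real.exp_add]
  ring

lemma renewalTerm_of_nonpos {R : A → A → Prop} (hT : ∀ y ∈ OneSubshift R, 0 ≤ T y)
    {y : ℕ → A} (hy : y ∈ OneSubshift R) {t : ℝ} (ht : t ≤ 0) (m : ℕ) :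
    renewalTerm F T t m y = renewalTerm F T 0 m y := by
  have hS := birkhoffN_nonneg hT hy m
  simp only [renewalTerm, if_pos hS, if_pos (ht.trans hS)]

lemma renewalTerm_le {R : A → A → Prop} {b : ℝ} (hF : ∀ y ∈ OneSubshift R, b ≤ F y)
    {y : ℕ → A} (hy : y ∈ OneSubshift R) (t : ℝ) (m : ℕ) :
    renewalTerm F T t m y ≤ Real.exp (-(m * b)) := by
  unfold renewalTerm
  split_ifs
  · simpa using mul_le_birkhoffN hF hy m
  · simp [Real.exp_nonneg]

lemma renewalTerm_eq_zero {R : A → A → Prop} {M : ℝ} (hT : ∀ y ∈ OneSubshift R, T y ≤ M)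
    {y : ℕ → A} (hy : y ∈ OneSubshift R) {t : ℝ} {m : ℕ} (ht : m * M < t) :
    renewalTerm F T t m y = 0 := by
  rw [renewalTerm, if_neg ((birkhoffN_le_mul hT hy m).trans_lt ht).not_ge, mul_zero]

lemma kappa_eq_kappa_zero {R : A → A → Prop} (hT : ∀ y ∈ OneSubshift R, 0 ≤ T y)
    (x : ℕ → A) {t : ℝ} (ht : t ≤ 0) : kappa R F T x t = kappa R F T x 0 :=
  tsum_congr fun p => renewalTerm_of_nonpos hT p.2.2.1 ht p.1

end RenewalTerm

lemma kappa_nonneg (R : A → A → Prop) (F T : (ℕ → A) → ℝ) (x : ℕ → A) (t : ℝ) :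
    0 ≤ kappa R F T x t :=
  tsum_nonneg fun p => renewalTerm_nonneg t p.1 p.2.val

section Cexp

variable {ω : ℂ}

lemma norm_ofReal_mul_cexp {a : ℝ} (ha : 0 ≤ a) (ω : ℂ) (r : ℝ) :
    ‖(a : ℂ) * Complex.exp (ω * r)‖ = a * Real.exp (ω.re * r) := by
  rw [norm_mul, Complex.norm_real, Real.norm_of_nonneg ha, Complex.norm_exp, Complex.re_mul_ofReal]

lemma norm_cexp_neg_lt_one (hω : 0 < ω.re) : ‖Complex.exp (-ω)‖ < 1 := by
  simpa [Complex.norm_exp] using hω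

lemma cexp_mul_neg_natCast (ω : ℂ) (k : ℕ) :
    Complex.exp (ω * (-(k : ℤ) : ℂ)) = Complex.exp (-ω) ^ k := by
  rw [← Complex.exp_nat_mul]
  push_cast
  ring_nf

lemma hasSum_ite_nonpos_mul_cexp (hω : 0 < ω.re) :
    HasSum (fun t : ℤ => ((if (t : ℝ) ≤ 0 then 1 else 0 : ℝ) : ℂ) * Complex.exp (ω * t))
      (1 / (1 - Complex.exp (-ω))) := by
  have hinj : Function.Injective fun k : ℕ => -(k : ℤ) := neg_injective.comp Nat.cast_injective
  rw [← hinj.hasSum_iff, one_div]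
  · have hcomp : (fun t : ℤ => ((if (t : ℝ) ≤ 0 then 1 else 0 : ℝ) : ℂ) * Complex.exp (ω * t)) ∘
        (fun k : ℕ => -(k : ℤ)) = fun k => Complex.exp (-ω) ^ k := by
      funext k
      simpa using cexp_mul_neg_natCast ω k
    rw [hcomp]
    exact hasSum_geometric_of_norm_lt_one (norm_cexp_neg_lt_one hω)
  · rintro t ht
    have : ¬ (t : ℝ) ≤ 0 := fun h => ht ⟨(-t).toNat, by
      have : t ≤ 0 := by exact_mod_cast h
      change -(((-t).toNat : ℕ) : ℤ) = t
      omega⟩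
    simp [this]

lemma HasSum.comp_sub_intCast_mul_cexp {f : ℝ → ℂ} {a : ℂ}
    (hf : HasSum (fun t : ℤ => f t * Complex.exp (ω * t)) a) (k : ℤ) :
    HasSum (fun t : ℤ => f (t - k) * Complex.exp (ω * t)) (Complex.exp (ω * k) * a) := by
  rw [← (Equiv.addRight k).hasSum_iff]
  have hcomp : (fun t : ℤ => f (t - k) * Complex.exp (ω * t)) ∘ Equiv.addRight k =
      fun s : ℤ => Complex.exp (ω * k) * (f s * Complex.exp (ω * s)) := by
    funext s
    simp only [Function.comp_apply, Equiv.coe_addRight, Int.cast_add, add_sub_cancel_right,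
      mul_add, Complex.exp_add]
    ring
  rw [hcomp]
  exact hf.mul_left _

end Cexp

lemma tsum_kappa_mul_cexp_neg {R : A → A → Prop} {F T : (ℕ → A) → ℝ}
    (hT : ∀ y ∈ OneSubshift R, 0 ≤ T y) (x : ℕ → A) {ω : ℂ} (hω : 0 < ω.re) :
    ∑' k : ℕ, (kappa R F T x (-(k : ℤ) : ℝ) : ℂ) * Complex.exp (ω * (-(k : ℤ) : ℂ)) =
      (kappa R F T x 0 : ℂ) / (1 - Complex.exp (-ω)) := by
  rw [tsum_congr fun k => by rw [kappa_eq_kappa_zero hT x (by simp), cexp_mul_neg_natCast],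
    tsum_mul_left, tsum_geometric_of_norm_lt_one (norm_cexp_neg_lt_one hω), div_eq_mul_inv]

structure RenewalBounds (R : A → A → Prop) (F T : (ℕ → A) → ℝ) (b M Ch h : ℝ) : Prop where
  finite_preim : ∀ (m : ℕ) (x : ℕ → A), (preim R m x).Finite
  card_preim_le : ∀ (m : ℕ), ∀ x ∈ OneSubshift R,
    (Nat.card (preim R m x) : ℝ) ≤ Ch * Real.exp (m * h)
  le_F : ∀ y ∈ OneSubshift R, b ≤ F y
  T_le : ∀ y ∈ OneSubshift R, T y ≤ M

namespace RenewalBounds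

variable {R : A → A → Prop} {F T : (ℕ → A) → ℝ} {b M Ch h : ℝ}
  (H : RenewalBounds R F T b M Ch h) {x : ℕ → A}
include H

lemma Ch_nonneg (hx : x ∈ OneSubshift R) : 0 ≤ Ch := by
  simpa using (Nat.cast_nonneg _).trans (H.card_preim_le 0 x hx)

lemma tsum_preim_renewalTerm_le (hx : x ∈ OneSubshift R) (t : ℝ) (m : ℕ) :
    ∑' y : preim R m x, renewalTerm F T t m y ≤ Ch * Real.exp (h - b) ^ m := by
  have := (H.finite_preim m x).fintype
  rw [tsum_fintype]
  calc ∑ y : preim R m x, renewalTerm F T t m y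
      ≤ Fintype.card (preim R m x) • Real.exp (-(m * b)) :=
        Finset.sum_le_card_nsmul _ _ _ fun y _ => renewalTerm_le H.le_F y.2.1 t m
    _ ≤ Ch * Real.exp (m * h) * Real.exp (-(m * b)) := by
        rw [nsmul_eq_mul, ← Nat.card_eq_fintype_card]
        exact mul_le_mul_of_nonneg_right (H.card_preim_le m x hx) (Real.exp_nonneg _)
    _ = Ch * Real.exp (h - b) ^ m := by
        rw [← Real.exp_nat_mul, mul_assoc, ← Real.exp_add]
        ring_nf

lemma summable_renewalTerm (hbh : h < b) (hx : x ∈ OneSubshift R) (t : ℝ) :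
    Summable fun p : Σ m : ℕ, preim R m x => renewalTerm F T t p.1 p.2 := by
  rw [summable_sigma_of_nonneg fun p : Σ m : ℕ, preim R m x => renewalTerm_nonneg t p.1 p.2.val]
  refine ⟨fun m => ?_, ?_⟩
  · have := (H.finite_preim m x).to_subtype
    exact Summable.of_finite
  · exact Summable.of_nonneg_of_le (fun m => tsum_nonneg fun _ => renewalTerm_nonneg _ _ _)
      (H.tsum_preim_renewalTerm_le hx t) ((summable_geometric_of_lt_one (Real.exp_nonneg _)
        (Real.exp_lt_one_iff.2 (sub_neg.2 hbh))).mul_left Ch)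

lemma kappa_eq_tsum_tsum (hbh : h < b) (hx : x ∈ OneSubshift R) (t : ℝ) :
    kappa R F T x t = ∑' m : ℕ, ∑' y : preim R m x, renewalTerm F T t m y :=
  (H.summable_renewalTerm hbh hx t).tsum_sigma

lemma kappa_le_exp (hbh : h < b) (hM : 0 < M) (hx : x ∈ OneSubshift R) (t : ℝ) :
    kappa R F T x t ≤ Ch / (1 - Real.exp (h - b)) * Real.exp (-((b - h) / M * t)) := by
  set q := Real.exp (h - b)
  have hq : q < 1 := Real.exp_lt_one_iff.2 (sub_neg.2 hbh)
  set n := ⌈t / M⌉₊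
  set level : ℕ → ℝ := fun m => ∑' y : preim R m x, renewalTerm F T t m y
  have hlevel : Summable level := (H.summable_renewalTerm hbh hx t).sigma
  have hlow : ∀ m ∈ Finset.range n, level m = 0 := fun m hm => by
    have hmM : m * M < t := (lt_div_iff₀ hM).1 (Nat.lt_ceil.1 (Finset.mem_range.1 hm))
    exact (tsum_congr fun y => renewalTerm_eq_zero H.T_le y.2.1 hmM).trans tsum_zero
  have hgeom := summable_geometric_of_lt_one (Real.exp_nonneg (h - b)) hq
  have hn : (b - h) / M * t ≤ n * (b - h) := by
    have := mul_le_mul_of_nonneg_right (Nat.le_ceil (t / M)) (sub_nonneg.2 hbh.le)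
    rwa [div_mul_eq_mul_div, mul_comm, ← div_mul_eq_mul_div] at this
  calc kappa R F T x t = ∑' j, level (j + n) := by
        rw [H.kappa_eq_tsum_tsum hbh hx t, ← hlevel.sum_add_tsum_nat_add n,
          Finset.sum_eq_zero hlow, zero_add]
    _ ≤ ∑' j, Ch * q ^ n * q ^ j :=
        Summable.tsum_le_tsum
          (fun j => (H.tsum_preim_renewalTerm_le hx t (j + n)).trans_eq (by ring))
          ((summable_nat_add_iff n).2 hlevel) (hgeom.mul_left _)
    _ = Ch / (1 - q) * q ^ n := by
        rw [tsum_mul_left, tsum_geometric_of_lt_one (Real.exp_nonneg _) hq]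
        ring
    _ ≤ Ch / (1 - q) * Real.exp (-((b - h) / M * t)) := by
        have : 0 ≤ Ch / (1 - q) := div_nonneg (H.Ch_nonneg hx) (sub_nonneg.2 hq.le)
        gcongr
        rw [← Real.exp_nat_mul]
        exact Real.exp_le_exp.2 (by linarith)

lemma tsum_tsum_renewalTerm_succ (hbh : h < b) (t : ℝ) :
    ∑' m : ℕ, ∑' z : preim R (m + 1) x, renewalTerm F T t (m + 1) z =
      ∑' y : preim R 1 x, Real.exp (-F y) * kappa R F T y (t - T y) := by
  let G : (Σ y : preim R 1 x, Σ m : ℕ, preim R m y) → ℝ :=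
    fun q => Real.exp (-F q.1) * renewalTerm F T (t - T q.1) q.2.1 q.2.2
  have hG : Summable G := by
    have := (H.finite_preim 1 x).to_subtype
    rw [summable_sigma_of_nonneg fun q => mul_nonneg (Real.exp_nonneg _) (renewalTerm_nonneg _ _ _)]
    exact ⟨fun y => (H.summable_renewalTerm hbh y.2.1 (t - T y)).mul_left (Real.exp (-F y)),
      Summable.of_finite⟩
  have hGe : ∀ p : Σ m : ℕ, preim R (m + 1) x,
      renewalTerm F T t (p.1 + 1) p.2 = G (preimSuccEquiv R x p) := by
    rintro ⟨m, z, hz⟩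
    exact renewalTerm_succ t m z
  calc ∑' m : ℕ, ∑' z : preim R (m + 1) x, renewalTerm F T t (m + 1) z
      = ∑' p : Σ m : ℕ, preim R (m + 1) x, renewalTerm F T t (p.1 + 1) p.2 :=
        (((preimSuccEquiv R x).summable_iff.2 hG).congr fun p => (hGe p).symm).tsum_sigma.symm
    _ = ∑' q, G q := (tsum_congr hGe).trans ((preimSuccEquiv R x).tsum_eq G)
    _ = _ := hG.tsum_sigma.trans (tsum_congr fun y => by rw [kappa, ← tsum_mul_left])

lemma kappa_eq_ite_add_tsum (hbh : h < b) (hx : x ∈ OneSubshift R) (t : ℝ) :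
    kappa R F T x t = (if t ≤ 0 then 1 else 0) +
      ∑' y : preim R 1 x, Real.exp (-F y) * kappa R F T y (t - T y) := by
  rw [H.kappa_eq_tsum_tsum hbh hx t, (H.summable_renewalTerm hbh hx t).sigma.tsum_eq_zero_add,
    H.tsum_tsum_renewalTerm_succ hbh t, ← renewalTerm_zero (F := F) (T := T) t x,
    ← tsum_preim_zero hx (renewalTerm F T t 0)]

lemma kappa_mul_exp_le (hbh : h < b) (hM : 0 < M) (hx : x ∈ OneSubshift R) (σ t : ℝ) :
    kappa R F T x t * Real.exp (σ * t) ≤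
      Ch / (1 - Real.exp (h - b)) * Real.exp ((σ - (b - h) / M) * t) := by
  calc kappa R F T x t * Real.exp (σ * t)
      ≤ Ch / (1 - Real.exp (h - b)) * Real.exp (-((b - h) / M * t)) * Real.exp (σ * t) :=
        mul_le_mul_of_nonneg_right (H.kappa_le_exp hbh hM hx t) (Real.exp_nonneg _)
    _ = _ := by rw [mul_assoc, ← Real.exp_add]; ring_nf

lemma summable_kappa_mul_exp (hbh : h < b) (hM : 0 < M) (hT : ∀ y ∈ OneSubshift R, 0 ≤ T y)
    (hx : x ∈ OneSubshift R) {σ : ℝ} (hσ0 : 0 < σ) (hσ : σ < (b - h) / M) :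
    Summable fun t : ℤ => kappa R F T x t * Real.exp (σ * t) := by
  refine Summable.of_nat_of_neg ?_ ?_
  · refine Summable.of_nonneg_of_le
      (fun n => mul_nonneg (kappa_nonneg R F T x _) (Real.exp_nonneg _)) (fun n => ?_) ((summable_geometric_of_lt_one (Real.exp_nonneg _)
        (Real.exp_lt_one_iff.2 (sub_neg.2 hσ))).mul_left (Ch / (1 - Real.exp (h - b))))
    simpa [← Real.exp_nat_mul, mul_comm] using H.kappa_mul_exp_le hbh hM hx σ n
  · refine ((summable_geometric_of_lt_one (Real.exp_nonneg _)
      (Real.exp_lt_one_iff.2 (neg_neg_of_pos hσ0))).mul_left (kappa R F T x 0)).congr fun n => ?_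
    rw [kappa_eq_kappa_zero hT x (t := ((-n : ℤ) : ℝ)) (by simp), ← Real.exp_nat_mul]
    push_cast
    ring_nf

lemma summable_norm_kappa_mul_cexp (hbh : h < b) (hM : 0 < M)
    (hT : ∀ y ∈ OneSubshift R, 0 ≤ T y) (hx : x ∈ OneSubshift R) {ω : ℂ} (hω0 : 0 < ω.re)
    (hω : ω.re < (b - h) / M) :
    Summable fun t : ℤ => ‖(kappa R F T x t : ℂ) * Complex.exp (ω * t)‖ :=
  (H.summable_kappa_mul_exp hbh hM hT hx hω0 hω).congr fun t => by
    simpa using (norm_ofReal_mul_cexp (kappa_nonneg R F T x t) ω t).symm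

lemma kappaHat_eq (hbh : h < b) (hM : 0 < M) (hT : ∀ y ∈ OneSubshift R, 0 ≤ T y)
    (hTℤ : ∀ y ∈ OneSubshift R, ∃ k : ℤ, T y = k) (hx : x ∈ OneSubshift R) {ω : ℂ}
    (hω0 : 0 < ω.re) (hω : ω.re < (b - h) / M) :
    kappaHat R F T x ω = 1 / (1 - Complex.exp (-ω)) +
      ∑' y : preim R 1 x, Complex.exp (ω * T y - F y) * kappaHat R F T y ω := by
  have := (H.finite_preim 1 x).fintype
  have hy : ∀ y : preim R 1 x, HasSum
      (fun t : ℤ => (Real.exp (-F y) : ℂ) * ((kappa R F T y (t - T y) : ℂ) * Complex.exp (ω * t)))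
      (Complex.exp (ω * T y - F y) * kappaHat R F T y ω) := by
    intro y
    obtain ⟨k, hk⟩ := hTℤ y y.2.1
    have := ((H.summable_norm_kappa_mul_cexp hbh hM hT y.2.1 hω0 hω).of_norm.hasSum
      |>.comp_sub_intCast_mul_cexp (f := fun s => (kappa R F T y s : ℂ)) k).mul_left
        (Real.exp (-F y) : ℂ)
    rw [hk, Complex.ofReal_intCast, sub_eq_neg_add, Complex.exp_add, mul_assoc,
      ← Complex.ofReal_neg, ← Complex.ofReal_exp]
    exact this
  refine HasSum.tsum_eq ?_
  rw [tsum_fintype]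
  convert (hasSum_ite_nonpos_mul_cexp hω0).add (hasSum_sum fun y _ => hy y) using 1
  funext t
  rw [H.kappa_eq_ite_add_tsum hbh hx, tsum_fintype, Complex.ofReal_add, Complex.ofReal_sum,
    add_mul, Finset.sum_mul]
  simp only [Complex.ofReal_mul, mul_assoc]

lemma tsum_norm_kappa_mul_cexp_succ_le (hbh : h < b) (hM : 0 < M) (hx : x ∈ OneSubshift R)
    {ω : ℂ} (hω : ω.re < (b - h) / M) :
    ∑' k : ℕ, ‖(kappa R F T x ((k : ℝ) + 1) : ℂ) * Complex.exp (ω * ((k : ℂ) + 1))‖ ≤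
      Ch / (1 - Real.exp (h - b)) / (1 - Real.exp (ω.re - (b - h) / M)) := by
  set C := Ch / (1 - Real.exp (h - b))
  set ρ := Real.exp (ω.re - (b - h) / M)
  have hρ : ρ < 1 := Real.exp_lt_one_iff.2 (sub_neg.2 hω)
  have hgeom := (summable_geometric_of_lt_one (Real.exp_nonneg _) hρ).mul_left C
  have hC : 0 ≤ C := div_nonneg (H.Ch_nonneg hx)
    (sub_nonneg.2 (Real.exp_le_one_iff.2 (sub_nonpos.2 hbh.le)))
  have hbound : ∀ k : ℕ,
      ‖(kappa R F T x ((k : ℝ) + 1) : ℂ) * Complex.exp (ω * ((k : ℂ) + 1))‖ ≤ C * ρ ^ k := by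
    intro k
    have hnorm := norm_ofReal_mul_cexp (kappa_nonneg R F T x ((k : ℝ) + 1)) ω ((k : ℝ) + 1)
    push_cast at hnorm
    rw [hnorm, ← Real.exp_nat_mul]
    refine (H.kappa_mul_exp_le hbh hM hx ω.re _).trans (mul_le_mul_of_nonneg_left ?_ hC)
    exact Real.exp_le_exp.2 (by nlinarith [sub_neg.2 hω])
  calc _ ≤ ∑' k : ℕ, C * ρ ^ k :=
        Summable.tsum_le_tsum hbound (hgeom.of_nonneg_of_le (fun _ => norm_nonneg _) hbound) hgeom
    _ = C / (1 - ρ) := by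
        rw [tsum_mul_left, tsum_geometric_of_lt_one (Real.exp_nonneg _) hρ, ← div_eq_mul_inv]

end RenewalBounds

theorem stmt7_general (R : A → A → Prop)
    (F T : (ℕ → A) → ℝ) (Ch h : ℝ) (hCh : 1 ≤ Ch) (hh : 0 ≤ h)
    (hfin : ∀ (m : ℕ) (x : ℕ → A), (preim R m x).Finite)
    (hcard : ∀ (m : ℕ), ∀ x ∈ OneSubshift R,
      (Nat.card (preim R m x) : ℝ) ≤ Ch * Real.exp (m * h))
    (hTint : ∀ x ∈ OneSubshift R, ∃ k : ℕ, 0 < k ∧ T x = (k : ℝ))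
    (hTbdd : BddAbove (T '' OneSubshift R))
    (hF : h + Real.log 2 ≤ sInf (F '' OneSubshift R)) :
    (∀ x ∈ OneSubshift R, ∀ ω : ℂ, 0 < ω.re →
      ω.re < (sInf (F '' OneSubshift R) - h) / sSup (T '' OneSubshift R) →
      -- κ^x is constant on the nonpositive integers
      (∀ t : ℤ, t ≤ 0 → kappa R F T x (t : ℝ) = kappa R F T x 0) ∧
      -- absolute convergence of the Fourier–Laplace transform
      Summable (fun t : ℤ =>
        ‖(kappa R F T x (t : ℝ) : ℂ) * Complex.exp (ω * (t : ℂ))‖) ∧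
      -- the sum over t ≤ 0
      (∑' k : ℕ, (kappa R F T x (-(k : ℤ) : ℝ) : ℂ) *
          Complex.exp (ω * (-(k : ℤ) : ℂ))) =
        (kappa R F T x 0 : ℂ) / (1 - Complex.exp (-ω)) ∧
      -- the transformed renewal equation
      kappaHat R F T x ω = 1 / (1 - Complex.exp (-ω)) +
        ∑' z : preim R 1 x,
          Complex.exp (ω * (T z.val : ℂ) - (F z.val : ℂ)) *
            kappaHat R F T z.val ω) ∧
    -- the tail sum over t ≥ 1 is bounded by C/(1 − e^{Re ω − ω⁻})
    ∃ C > (0 : ℝ), ∀ x ∈ OneSubshift R, ∀ ω : ℂ, 0 < ω.re →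
      ω.re < (sInf (F '' OneSubshift R) - h) / sSup (T '' OneSubshift R) →
      (∑' k : ℕ, ‖(kappa R F T x ((k : ℝ) + 1) : ℂ) *
          Complex.exp (ω * ((k : ℂ) + 1))‖) ≤
        C / (1 - Real.exp (ω.re -
          (sInf (F '' OneSubshift R) - h) / sSup (T '' OneSubshift R))) := by
  set b := sInf (F '' OneSubshift R)
  set M := sSup (T '' OneSubshift R)
  have hbh : h < b := by linarith [Real.log_pos one_lt_two]
  have hFbdd : BddBelow (F '' OneSubshift R) := by
    by_contra hunbdd
    have : b = 0 := Real.sInf_of_not_bddBelow hunbdd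
    linarith
  have H : RenewalBounds R F T b M Ch h := ⟨hfin, hcard,
    fun y hy => csInf_le hFbdd ⟨y, hy, rfl⟩, fun y hy => le_csSup hTbdd ⟨y, hy, rfl⟩⟩
  have hT : ∀ y ∈ OneSubshift R, 0 ≤ T y := fun y hy => by
    obtain ⟨k, -, hk⟩ := hTint y hy
    exact hk ▸ Nat.cast_nonneg k
  have hTℤ : ∀ y ∈ OneSubshift R, ∃ k : ℤ, T y = k := fun y hy => by
    obtain ⟨k, -, hk⟩ := hTint y hy
    exact ⟨k, by rw [hk, Int.cast_natCast]⟩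
  have hM : ∀ x ∈ OneSubshift R, 0 < M := fun x hx => by
    obtain ⟨k, hk0, hk⟩ := hTint x hx
    exact (hk ▸ Nat.cast_pos.2 hk0 : (0 : ℝ) < T x).trans_le (H.T_le x hx)
  refine ⟨fun x hx ω hω0 hω => ⟨fun t ht => kappa_eq_kappa_zero hT x (by exact_mod_cast ht),
      H.summable_norm_kappa_mul_cexp hbh (hM x hx) hT hx hω0 hω,
      tsum_kappa_mul_cexp_neg hT x hω0, H.kappaHat_eq hbh (hM x hx) hT hTℤ hx hω0 hω⟩,
    Ch / (1 - Real.exp (h - b)), ?_,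
    fun x hx ω _ hω => H.tsum_norm_kappa_mul_cexp_succ_le hbh (hM x hx) hx hω⟩
  exact div_pos (by linarith) (sub_pos.2 (Real.exp_lt_one_iff.2 (sub_neg.2 hbh)))

theorem stmt7 [Fintype A] [Nonempty A] (R : A → A → Prop)
    (hXne : (OneSubshift R).Nonempty)
    (hsurj : ∀ x ∈ OneSubshift R, ∃ y ∈ OneSubshift R, shiftN y = x)
    (F T : (ℕ → A) → ℝ) (Ch h : ℝ) (hCh : 1 ≤ Ch) (hh : 0 ≤ h)
    (hfin : ∀ (m : ℕ) (x : ℕ → A), (preim R m x).Finite)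
    (hcard : ∀ (m : ℕ), ∀ x ∈ OneSubshift R,
      (Nat.card (preim R m x) : ℝ) ≤ Ch * Real.exp (m * h))
    (hTint : ∀ x ∈ OneSubshift R, ∃ k : ℕ, 0 < k ∧ T x = (k : ℝ))
    (hTbdd : BddAbove (T '' OneSubshift R))
    (hF : h + Real.log 2 ≤ sInf (F '' OneSubshift R)) :
    (∀ x ∈ OneSubshift R, ∀ ω : ℂ, 0 < ω.re →
      ω.re < (sInf (F '' OneSubshift R) - h) / sSup (T '' OneSubshift R) →
      -- κ^x is constant on the nonpositive integers
      (∀ t : ℤ, t ≤ 0 → kappa R F T x (t : ℝ) = kappa R F T x 0) ∧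
      -- absolute convergence of the Fourier–Laplace transform
      Summable (fun t : ℤ =>
        ‖(kappa R F T x (t : ℝ) : ℂ) * Complex.exp (ω * (t : ℂ))‖) ∧
      -- the sum over t ≤ 0
      (∑' k : ℕ, (kappa R F T x (-(k : ℤ) : ℝ) : ℂ) *
          Complex.exp (ω * (-(k : ℤ) : ℂ))) =
        (kappa R F T x 0 : ℂ) / (1 - Complex.exp (-ω)) ∧
      -- the transformed renewal equation
      kappaHat R F T x ω = 1 / (1 - Complex.exp (-ω)) +
        ∑' z : preim R 1 x,
          Complex.exp (ω * (T z.val : ℂ) - (F z.val : ℂ)) *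
            kappaHat R F T z.val ω) ∧
    -- the tail sum over t ≥ 1 is bounded by C/(1 − e^{Re ω − ω⁻})
    ∃ C > (0 : ℝ), ∀ x ∈ OneSubshift R, ∀ ω : ℂ, 0 < ω.re →
      ω.re < (sInf (F '' OneSubshift R) - h) / sSup (T '' OneSubshift R) →
      (∑' k : ℕ, ‖(kappa R F T x ((k : ℝ) + 1) : ℂ) *
          Complex.exp (ω * ((k : ℂ) + 1))‖) ≤
        C / (1 - Real.exp (ω.re -
          (sInf (F '' OneSubshift R) - h) / sSup (T '' OneSubshift R))) :=
  stmt7_general R F T Ch h hCh hh hfin hcard hTint hTbdd hF
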